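/- arXiv:1301.6291 — 7 statements merged into one kernel-verified Lean document; each statement's English description precedes it below -/
import Mathlib

section
/- Let c ∈ (0, 1), let x* > 0 be the unique solution of ln(x* + c) = x*/(x* + c), and define h_c : [0, ∞) → ℝ by h_c(x) = x/(2·ln 2·(x* + c)) for 0 ≤ x ≤ x* and h_c(x) = (1/2)·log₂(x + c) for x ≥ x*. Then h_c is the upper concave envelope of f⁺(x) = max(0, (1/2)·log₂(x + c)) on [0, ∞): h_c is concave on [0, ∞), h_c(x) ≥ f⁺(x) for all x ≥ 0 (with equality for x ≥ x*), and any concave function φ on [0, ∞) with φ(x) ≥ f⁺(x) for all x ≥ 0 satisfies φ(x) ≥ h_c(x) for all x ≥ 0. -/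
/-!
The line `x ↦ x / (x* + c)` through the origin is tangent to `log (x + c)` at `x*`; this is exactly
the defining equation of `x*`. Concavity of `log` puts both this line and every tangent at a point
`z ≥ x*` above the piecewise function, which is therefore an infimum of affine functions attained at
every point, hence concave. Conversely a concave majorant is `≥ 0` at `0` and `≥ log (x* + c)` at `x*`,
so it lies above the chord joining these points, which is the linear piece.
-/

open Real Set

theorem Real.log_le_log_add_sub_div {u v : ℝ} (hu : 0 < u) (hv : 0 < v) :
    log u ≤ log v + (u - v) / v := by
  have h := log_le_sub_one_of_pos (div_pos hu hv)
  rw [log_div hu.ne' hv.ne', div_sub_one hv.ne'] at h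
  linarith

theorem concaveOn_of_forall_affine_majorant {𝕜 : Type*} [Field 𝕜] [LinearOrder 𝕜]
    [IsStrictOrderedRing 𝕜] {s : Set 𝕜} {f : 𝕜 → 𝕜} (hs : Convex 𝕜 s)
    (hf : ∀ z ∈ s, ∃ a b : 𝕜, f z = a * z + b ∧ ∀ x ∈ s, f x ≤ a * x + b) :
    ConcaveOn 𝕜 s f := by
  refine ⟨hs, fun x hx y hy p q hp hq hpq => ?_⟩
  obtain ⟨a, b, hz, hle⟩ := hf _ (hs hx hy hp hq hpq)
  have hcombo : a * (p • x + q • y) + b = p * (a * x + b) + q * (a * y + b) := by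
    simp only [smul_eq_mul]; linear_combination (-b) * hpq
  rw [hz, hcombo, smul_eq_mul, smul_eq_mul]
  gcongr
  exacts [hle x hx, hle y hy]

theorem ConcaveOn.mul_le_of_mem_Icc {φ : ℝ → ℝ} (hφ : ConcaveOn ℝ (Ici 0) φ) (h0 : 0 ≤ φ 0)
    {a m : ℝ} (ha : 0 < a) (hma : m * a ≤ φ a) {x : ℝ} (hx : x ∈ Icc 0 a) : m * x ≤ φ x := by
  have ht : 0 ≤ x / a := div_nonneg hx.1 ha.le
  have ht' : 0 ≤ 1 - x / a := sub_nonneg.2 ((div_le_one ha).2 hx.2)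
  have hchord := hφ.2 (mem_Ici.2 le_rfl) (mem_Ici.2 ha.le) ht' ht (sub_add_cancel 1 (x / a))
  simp only [smul_eq_mul, mul_zero, zero_add, div_mul_cancel₀ x ha.ne'] at hchord
  calc m * x = x / a * (m * a) := by field_simp
    _ ≤ (1 - x / a) * φ 0 + x / a * φ a := by nlinarith
    _ ≤ φ x := hchord

/-- `2 ln 2 · h_c`, the concave envelope of `max 0 (log (x + c))` on `[0, ∞)`, where `xs` is `x*`. -/
noncomputable def logEnvelope (c xs x : ℝ) : ℝ :=
  if x ≤ xs then x / (xs + c) else log (x + c)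

section logEnvelope

variable {c xs : ℝ} (hc : 0 < c) (hxs : 0 ≤ xs) (heq : log (xs + c) = xs / (xs + c))
include hc hxs heq

theorem log_add_le_div {x : ℝ} (hx : 0 ≤ x) : log (x + c) ≤ x / (xs + c) := by
  have h :=
    log_le_log_add_sub_div (add_pos_of_nonneg_of_pos hx hc) (add_pos_of_nonneg_of_pos hxs hc)
  rw [heq] at h
  calc log (x + c) ≤ xs / (xs + c) + (x + c - (xs + c)) / (xs + c) := h
    _ = x / (xs + c) := by ring

theorem logEnvelope_le_div {x : ℝ} (hx : 0 ≤ x) : logEnvelope c xs x ≤ x / (xs + c) := by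
  unfold logEnvelope
  split_ifs
  · exact le_rfl
  · exact log_add_le_div hc hxs heq hx

theorem logEnvelope_le_tangent {z x : ℝ} (hz : xs ≤ z) (hx : 0 ≤ x) :
    logEnvelope c xs x ≤ log (z + c) + (x - z) / (z + c) := by
  have hxsc : 0 < xs + c := by linarith
  have hzc : 0 < z + c := by linarith
  unfold logEnvelope
  split_ifs with hxxs
  · have htangent := log_le_log_add_sub_div hxsc hzc
    rw [heq] at htangent
    -- the linear piece has the larger slope, so it lies below the tangent at `z` left of `xs`
    have hslope : 0 ≤ (xs - x) * (1 / (xs + c) - 1 / (z + c)) :=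
      mul_nonneg (sub_nonneg.2 hxxs) (sub_nonneg.2 (one_div_le_one_div_of_le hxsc (by linarith)))
    calc x / (xs + c)
        = xs / (xs + c) - (xs + c - (z + c)) / (z + c) + (x - z) / (z + c)
          - (xs - x) * (1 / (xs + c) - 1 / (z + c)) := by ring
      _ ≤ log (z + c) + (x - z) / (z + c) := by linarith
  · have h := log_le_log_add_sub_div (add_pos_of_nonneg_of_pos hx hc) hzc
    rwa [add_sub_add_right_eq_sub] at h

theorem concaveOn_logEnvelope : ConcaveOn ℝ (Ici 0) (logEnvelope c xs) := by
  refine concaveOn_of_forall_affine_majorant (convex_Ici 0) fun z _ => ?_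
  by_cases hz : z ≤ xs
  · refine ⟨1 / (xs + c), 0, ?_, fun x hx => ?_⟩
    · rw [logEnvelope, if_pos hz]; ring
    · simpa [div_eq_inv_mul] using logEnvelope_le_div hc hxs heq hx
  · refine ⟨1 / (z + c), log (z + c) - z / (z + c), ?_, fun x hx => ?_⟩
    · rw [logEnvelope, if_neg hz]; ring
    · calc logEnvelope c xs x ≤ log (z + c) + (x - z) / (z + c) :=
            logEnvelope_le_tangent hc hxs heq (not_le.1 hz).le hx
        _ = 1 / (z + c) * x + (log (z + c) - z / (z + c)) := by ring

theorem log_add_nonneg_of_le {x : ℝ} (hx : xs ≤ x) : 0 ≤ log (x + c) :=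
  calc 0 ≤ xs / (xs + c) := by positivity
    _ = log (xs + c) := heq.symm
    _ ≤ log (x + c) := log_le_log (by linarith) (by linarith)

theorem max_zero_log_add_le_logEnvelope {x : ℝ} (hx : 0 ≤ x) :
    max 0 (log (x + c)) ≤ logEnvelope c xs x := by
  unfold logEnvelope
  split_ifs with hxxs
  · exact max_le (by positivity) (log_add_le_div hc hxs heq hx)
  · exact max_le (log_add_nonneg_of_le hc hxs heq (not_le.1 hxxs).le) le_rfl

end logEnvelope

theorem stmt_3_general (c : ℝ) (hc0 : 0 < c)
    (xs : ℝ) (hxs : 0 < xs) (heq : Real.log (xs + c) = xs / (xs + c))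
    (h : ℝ → ℝ)
    (hlin : ∀ x : ℝ, 0 ≤ x → x ≤ xs → h x = x / (2 * Real.log 2 * (xs + c)))
    (hlog : ∀ x : ℝ, xs ≤ x → h x = (1 / 2) * Real.logb 2 (x + c)) :
    ConcaveOn ℝ (Set.Ici 0) h ∧
    (∀ x : ℝ, 0 ≤ x → max 0 ((1 / 2) * Real.logb 2 (x + c)) ≤ h x) ∧
    (∀ x : ℝ, xs ≤ x → h x = max 0 ((1 / 2) * Real.logb 2 (x + c))) ∧
    (∀ φ : ℝ → ℝ, ConcaveOn ℝ (Set.Ici 0) φ →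
      (∀ x : ℝ, 0 ≤ x → max 0 ((1 / 2) * Real.logb 2 (x + c)) ≤ φ x) →
      ∀ x : ℝ, 0 ≤ x → h x ≤ φ x) := by
  have hlog2 : 0 < 2 * log 2 := by positivity
  have hf : ∀ x, 1 / 2 * logb 2 (x + c) = log (x + c) / (2 * log 2) := fun x => by
    rw [logb]; ring
  have hfplus : ∀ x, max 0 (1 / 2 * logb 2 (x + c)) = max 0 (log (x + c)) / (2 * log 2) :=
    fun x => by rw [hf, ← max_div_div_right hlog2.le, zero_div]
  have htouch : 1 / (2 * log 2 * (xs + c)) * xs = 1 / 2 * logb 2 (xs + c) := by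
    rw [hf, heq]; field_simp
  have hE : ∀ x ∈ Ici 0, (2 * log 2)⁻¹ * logEnvelope c xs x = h x := by
    intro x hx
    rw [logEnvelope]
    split_ifs with hxxs
    · rw [hlin x hx hxxs]; field_simp
    · rw [hlog x (not_le.1 hxxs).le, hf]; field_simp
  refine ⟨((concaveOn_logEnvelope hc0 hxs.le heq).smul (inv_nonneg.2 hlog2.le)).congr hE,
    fun x hx => ?_, fun x hx => ?_, fun φ hφ hmaj x hx => ?_⟩
  · rw [hfplus, ← hE x hx, ← div_eq_inv_mul]
    gcongr
    exact max_zero_log_add_le_logEnvelope hc0 hxs.le heq hx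
  · have hnonneg : 0 ≤ 1 / 2 * logb 2 (x + c) :=
      hf x ▸ div_nonneg (log_add_nonneg_of_le hc0 hxs.le heq hx) hlog2.le
    rw [hlog x hx, max_eq_right hnonneg]
  · rcases le_or_gt x xs with hxxs | hxxs
    · rw [hlin x hx hxxs, div_eq_mul_one_div, mul_comm]
      refine hφ.mul_le_of_mem_Icc ((le_max_left _ _).trans (hmaj 0 le_rfl)) hxs ?_ ⟨hx, hxxs⟩
      exact htouch ▸ (le_max_right _ _).trans (hmaj xs hxs.le)
    · rw [hlog x hxxs.le]
      exact (le_max_right _ _).trans (hmaj x hx)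

/-- For `c ∈ (0,1)` and `x* > 0` the unique solution of `ln (x* + c) = x*/(x* + c)`,
the function `h_c` (linear `x/(2 ln 2 (x*+c))` on `[0, x*]`, equal to `(1/2) log₂ (x+c)`
on `[x*, ∞)`) is the upper concave envelope of `f⁺ x = max 0 ((1/2) log₂ (x + c))` on
`[0, ∞)`: it is concave, majorizes `f⁺` (with equality for `x ≥ x*`), and is below any
concave majorant of `f⁺` on `[0, ∞)`. -/
theorem stmt_3 (c : ℝ) (hc0 : 0 < c) (hc1 : c < 1)
    (xs : ℝ) (hxs : 0 < xs) (heq : Real.log (xs + c) = xs / (xs + c))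
    (h : ℝ → ℝ)
    (hlin : ∀ x : ℝ, 0 ≤ x → x ≤ xs → h x = x / (2 * Real.log 2 * (xs + c)))
    (hlog : ∀ x : ℝ, xs ≤ x → h x = (1 / 2) * Real.logb 2 (x + c)) :
    ConcaveOn ℝ (Set.Ici 0) h ∧
    (∀ x : ℝ, 0 ≤ x → max 0 ((1 / 2) * Real.logb 2 (x + c)) ≤ h x) ∧
    (∀ x : ℝ, xs ≤ x → h x = max 0 ((1 / 2) * Real.logb 2 (x + c))) ∧
    (∀ φ : ℝ → ℝ, ConcaveOn ℝ (Set.Ici 0) φ →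
      (∀ x : ℝ, 0 ≤ x → max 0 ((1 / 2) * Real.logb 2 (x + c)) ≤ φ x) →
      ∀ x : ℝ, 0 ≤ x → h x ≤ φ x) :=
  stmt_3_general c hc0 xs hxs heq h hlin hlog
end

section
/- Let g > 0 and c = 1/(g+1). Let x* > 0 be the unique solution of ln(x* + c) = x*/(x* + c), and let h_c : [0, ∞) → ℝ be defined by h_c(x) = x/(2·ln 2·(x* + c)) for 0 ≤ x ≤ x* and h_c(x) = (1/2)·log₂(x + c) for x ≥ x*. Then for every x ≥ 0, (1/2)·log₂(1 + x) − h_c(x) ≤ max{ (1/2)·log₂(x* + c) − (x* − g/(g+1))/(2·ln 2·(x* + c)) , (1/2)·log₂(1 + (g/(g+1))/(x* + c)) }. -/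
open Real

/-! On `[0, x*]` the rate `h_c` is linear with the slope `1/(2 ln 2 (x* + c))` of `½ log₂` at
`s = x* + c`, so the tangent-line bound `log y ≤ log s + (y - s)/s` at `y = 1 + x` bounds the gap
by a constant, using `1 - c = g/(g+1)`. On `[x*, ∞)` the gap is `½ log₂ (1 + (1 - c)/(x + c))`,
which decreases in `x` and so is largest at `x*`. -/

namespace Real

lemma logb_le_logb_add_sub_div {b s y : ℝ} (hb : 1 < b) (hs : 0 < s) (hy : 0 < y) :
    logb b y ≤ logb b s + (y - s) / (log b * s) := by
  have hlogb : 0 < log b := log_pos hb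
  have tangent : log y ≤ log s + (y - s) / s := by
    have := log_le_sub_one_of_pos (div_pos hy hs)
    rw [log_div hy.ne' hs.ne', div_sub_one hs.ne'] at this
    linarith
  calc logb b y ≤ (log s + (y - s) / s) / log b := div_le_div_of_nonneg_right tangent hlogb.le
    _ = logb b s + (y - s) / (log b * s) := by rw [add_div, div_div, mul_comm s, logb]

lemma logb_one_add_sub_logb_add_le {b c s x : ℝ} (hb : 1 < b) (hc : c ≤ 1) (hs : 0 < s + c)
    (hsx : s ≤ x) :
    logb b (1 + x) - logb b (x + c) ≤ logb b (1 + (1 - c) / (s + c)) := by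
  have hxc : 0 < x + c := by linarith
  rw [← logb_div (by linarith) hxc.ne']
  have hratio : (1 + x) / (x + c) ≤ 1 + (1 - c) / (s + c) := by
    calc (1 + x) / (x + c) = 1 + (1 - c) / (x + c) := by field_simp; ring
      _ ≤ 1 + (1 - c) / (s + c) := by gcongr
  exact logb_le_logb_of_le hb (div_pos (by linarith) hxc) hratio

end Real

theorem stmt_5_general (g : ℝ) (hg : 0 < g) (c : ℝ) (hc : c = 1 / (g + 1))
    (xs : ℝ) (hxs : 0 < xs)
    (h : ℝ → ℝ)
    (hlin : ∀ x : ℝ, 0 ≤ x → x ≤ xs → h x = x / (2 * Real.log 2 * (xs + c)))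
    (hlog : ∀ x : ℝ, xs ≤ x → h x = (1 / 2) * Real.logb 2 (x + c)) :
    ∀ x : ℝ, 0 ≤ x →
      (1 / 2) * Real.logb 2 (1 + x) - h x ≤
        max ((1 / 2) * Real.logb 2 (xs + c) -
              (xs - g / (g + 1)) / (2 * Real.log 2 * (xs + c)))
            ((1 / 2) * Real.logb 2 (1 + (g / (g + 1)) / (xs + c))) := by
  intro x hx
  have hc_pos : 0 < c := by rw [hc]; positivity
  have hc_le : c ≤ 1 := by rw [hc, div_le_one (by linarith)]; linarith
  have hg_eq : g / (g + 1) = 1 - c := by rw [hc]; field_simp; ring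
  rcases le_total x xs with hx_le | hx_ge
  · refine le_max_of_le_left ?_
    have key := logb_le_logb_add_sub_div one_lt_two (by linarith : 0 < xs + c)
      (by linarith : 0 < 1 + x)
    rw [hlin x hx hx_le, hg_eq]
    have slope : x / (2 * log 2 * (xs + c)) - (xs - (1 - c)) / (2 * log 2 * (xs + c)) =
        (1 + x - (xs + c)) / (log 2 * (xs + c)) / 2 := by
      field_simp
      ring
    linarith
  · refine le_max_of_le_right ?_
    rw [hlog x hx_ge, hg_eq, ← mul_sub]
    have := logb_one_add_sub_logb_add_le one_lt_two hc_le (by linarith) hx_ge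
    linarith

/-- For `g > 0`, `c = 1/(g+1)`, `x*` the unique positive solution of
`ln (x* + c) = x*/(x* + c)`, and `h_c` the envelope function, for every `x ≥ 0` the gap
`(1/2) log₂ (1 + x) − h_c x` is bounded by the maximum of
`(1/2) log₂ (x* + c) − (x* − g/(g+1))/(2 ln 2 (x* + c))` and
`(1/2) log₂ (1 + (g/(g+1))/(x* + c))`. -/
theorem stmt_5 (g : ℝ) (hg : 0 < g) (c : ℝ) (hc : c = 1 / (g + 1))
    (xs : ℝ) (hxs : 0 < xs) (heq : Real.log (xs + c) = xs / (xs + c))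
    (h : ℝ → ℝ)
    (hlin : ∀ x : ℝ, 0 ≤ x → x ≤ xs → h x = x / (2 * Real.log 2 * (xs + c)))
    (hlog : ∀ x : ℝ, xs ≤ x → h x = (1 / 2) * Real.logb 2 (x + c)) :
    ∀ x : ℝ, 0 ≤ x →
      (1 / 2) * Real.logb 2 (1 + x) - h x ≤
        max ((1 / 2) * Real.logb 2 (xs + c) -
              (xs - g / (g + 1)) / (2 * Real.log 2 * (xs + c)))
            ((1 / 2) * Real.logb 2 (1 + (g / (g + 1)) / (xs + c))) :=
  stmt_5_general g hg c hc xs hxs h hlin hlog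
end

section
/- Let 0 < g < 1 and c = 1/(g+1). Let y* > 0 be the unique solution of ln(g·(y* + c)) = y*/(y* + c), and let k_g : [0, ∞) → ℝ be defined by k_g(x) = x/(2·ln 2·(y* + c)) for 0 ≤ x ≤ y* and k_g(x) = (1/2)·log₂(g·x + g/(g+1)) for x ≥ y*. Then for every x ≥ 0, (1/2)·log₂(1 + g·x) − k_g(x) ≤ max{ (1/2)·log₂(g·y* + g/(g+1)) − (g·y* − 1/(g+1))/(2·ln 2·(g·y* + g/(g+1))) , (1/2)·log₂((g·y* + 1)/(g·y* + g/(g+1))) }. -/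
open Real

/-- For `0 < g < 1`, `c = 1/(g+1)`, `y*` the unique positive solution of
`ln (g(y* + c)) = y*/(y* + c)`, and `k_g` the envelope function, for every `x ≥ 0` the gap
`(1/2) log₂ (1 + g x) − k_g x` is bounded by the maximum of
`(1/2) log₂ (g y* + g/(g+1)) − (g y* − 1/(g+1))/(2 ln 2 (g y* + g/(g+1)))` and
`(1/2) log₂ ((g y* + 1)/(g y* + g/(g+1)))`. -/
theorem stmt_6 (g : ℝ) (hg0 : 0 < g) (hg1 : g < 1) (c : ℝ) (hc : c = 1 / (g + 1))
    (ys : ℝ) (hys : 0 < ys) (heq : Real.log (g * (ys + c)) = ys / (ys + c))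
    (k : ℝ → ℝ)
    (klin : ∀ x : ℝ, 0 ≤ x → x ≤ ys → k x = x / (2 * Real.log 2 * (ys + c)))
    (klog : ∀ x : ℝ, ys ≤ x → k x = (1 / 2) * Real.logb 2 (g * x + g / (g + 1))) :
    ∀ x : ℝ, 0 ≤ x →
      (1 / 2) * Real.logb 2 (1 + g * x) - k x ≤
        max ((1 / 2) * Real.logb 2 (g * ys + g / (g + 1)) -
              (g * ys - 1 / (g + 1)) / (2 * Real.log 2 * (g * ys + g / (g + 1))))
            ((1 / 2) * Real.logb 2 ((g * ys + 1) / (g * ys + g / (g + 1)))) := by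
  intro x hx
  have hL : (0:ℝ) < Real.log 2 := Real.log_pos (by norm_num)
  have hg1' : (0:ℝ) < g + 1 := by linarith
  have hc0 : 0 < c := by rw [hc]; positivity
  have hgc : g / (g + 1) = g * c := by rw [hc]; ring
  have hP : (0:ℝ) < ys + c := by linarith
  have hA : (0:ℝ) < g * (ys + c) := by positivity
  have hAeq : g * ys + g / (g + 1) = g * (ys + c) := by rw [hgc]; ring
  have hcg1 : c * (g + 1) = 1 := by rw [hc]; field_simp
  have hgc1 : g * c < 1 := by nlinarith
  rcases le_total x ys with hxy | hxy
  · -- linear piece : bound by the first term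
    rw [klin x hx hxy]
    refine le_trans ?_ (le_max_left _ _)
    rw [hAeq, ← hc]
    simp only [Real.logb]
    have h1 : (0:ℝ) < 1 + g * x := by positivity
    have hup : Real.log (1 + g * x) ≤
        Real.log (g * (ys + c)) + ((1 + g * x) / (g * (ys + c)) - 1) := by
      have h := Real.log_le_sub_one_of_pos
        (show (0:ℝ) < (1 + g * x) / (g * (ys + c)) by positivity)
      rw [Real.log_div h1.ne' hA.ne'] at h
      linarith
    have hnum : g * ys - c = g * (ys + c) - 1 := by linear_combination -hcg1
    calc (1/2) * (Real.log (1 + g * x) / Real.log 2) - x / (2 * Real.log 2 * (ys + c))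
        ≤ (1/2) * ((Real.log (g * (ys + c)) + ((1 + g * x) / (g * (ys + c)) - 1)) / Real.log 2)
            - x / (2 * Real.log 2 * (ys + c)) := by
          have := (div_le_div_iff_of_pos_right hL).mpr hup
          linarith
      _ = (1/2) * (Real.log (g * (ys + c)) / Real.log 2)
            - (g * ys - c) / (2 * Real.log 2 * (g * (ys + c))) := by
          rw [hnum]; field_simp; ring
  · -- log piece : bound by the second term
    rw [klog x hxy]
    refine le_trans ?_ (le_max_right _ _)
    rw [hAeq, hgc]
    have h1 : (0:ℝ) < 1 + g * x := by positivity
    have h2 : (0:ℝ) < g * x + g * c := by positivity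
    have h3 : (0:ℝ) < g * ys + 1 := by positivity
    have h4 : (0:ℝ) < g * ys + g * c := by positivity
    have key : (1 + g * x) * (g * ys + g * c) ≤ (g * ys + 1) * (g * x + g * c) := by
      nlinarith [mul_nonneg (sub_nonneg.2 hxy) (mul_pos hg0 (sub_pos.2 hgc1)).le]
    have hlog : Real.log (1 + g * x) + Real.log (g * ys + g * c) ≤
        Real.log (g * ys + 1) + Real.log (g * x + g * c) := by
      rw [← Real.log_mul h1.ne' h4.ne', ← Real.log_mul h3.ne' h2.ne']
      exact Real.log_le_log (by positivity) key
    have hq : Real.log ((g * ys + 1) / (g * (ys + c))) =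
        Real.log (g * ys + 1) - Real.log (g * ys + g * c) := by
      rw [Real.log_div h3.ne' hA.ne']
      congr 2
      ring
    simp only [Real.logb]
    rw [hq]
    calc (1/2) * (Real.log (1 + g * x) / Real.log 2)
          - (1/2) * (Real.log (g * x + g * c) / Real.log 2)
        = (Real.log (1 + g * x) - Real.log (g * x + g * c)) / (2 * Real.log 2) := by ring
      _ ≤ (Real.log (g * ys + 1) - Real.log (g * ys + g * c)) / (2 * Real.log 2) := by
          apply div_le_div_of_nonneg_right ?_ (by positivity)
          linarith
      _ = (1/2) * ((Real.log (g * ys + 1) - Real.log (g * ys + g * c)) / Real.log 2) := by ring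
end

section
/- For every g > 0 with c = 1/(g+1), and every x ≥ 0, the gap satisfies (1/2)·log₂(1 + x) − h_c(x) ≤ 0.2654, where h_c is defined via the unique positive solution x* of ln(x* + c) = x*/(x* + c) by h_c(x) = x/(2·ln 2·(x* + c)) for 0 ≤ x ≤ x* and h_c(x) = (1/2)·log₂(x + c) for x ≥ x*. -/
open Real

lemma num_bound : 1 / (2 * Real.exp 1 * Real.log 2) ≤ 0.2654 := by
  have h1 := Real.exp_one_gt_d9
  have h2 := Real.log_two_gt_d9
  have he : (0:ℝ) < Real.exp 1 := Real.exp_pos 1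
  rw [div_le_iff₀ (by nlinarith)]
  nlinarith

/-- For every `g > 0` with `c = 1/(g+1)`, `x*` the unique positive solution of
`ln (x* + c) = x*/(x* + c)`, and `h_c` the envelope function, the gap
`(1/2) log₂ (1 + x) − h_c x` is at most `0.2654` for every `x ≥ 0`. -/
theorem stmt_8 (g : ℝ) (hg : 0 < g) (c : ℝ) (hc : c = 1 / (g + 1))
    (xs : ℝ) (hxs : 0 < xs) (heq : Real.log (xs + c) = xs / (xs + c))
    (h : ℝ → ℝ)
    (hlin : ∀ x : ℝ, 0 ≤ x → x ≤ xs → h x = x / (2 * Real.log 2 * (xs + c)))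
    (hlog : ∀ x : ℝ, xs ≤ x → h x = (1 / 2) * Real.logb 2 (x + c)) :
    ∀ x : ℝ, 0 ≤ x → (1 / 2) * Real.logb 2 (1 + x) - h x ≤ 0.2654 := by
  intro x hx
  have he : (0:ℝ) < Real.exp 1 := Real.exp_pos 1
  have hL2 : (0:ℝ) < Real.log 2 := Real.log_pos (by norm_num)
  have hc0 : 0 < c := by rw [hc]; positivity
  have hc1 : c < 1 := by
    rw [hc]
    rw [div_lt_one (by linarith)]
    linarith
  set t := xs + c with htdef
  have ht0 : 0 < t := by positivity
  have htlog : Real.log t = xs / t := heq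
  have ht1 : 1 < t := by
    by_contra hcon
    push_neg at hcon
    have h1 : Real.log t ≤ 0 := Real.log_nonpos (le_of_lt ht0) hcon
    have h2 : 0 < xs / t := by positivity
    rw [htlog] at h1; linarith
  have hte : t ≤ Real.exp 1 := by
    have h1 : Real.log t < 1 := by
      rw [htlog, div_lt_one ht0]; linarith
    have h2 : t = Real.exp (Real.log t) := (Real.exp_log ht0).symm
    rw [h2]
    exact le_of_lt (Real.exp_lt_exp.mpr h1)
  have key1 : Real.log t + 1 / t ≤ 1 + 1 / Real.exp 1 := by
    have hlt : Real.log t ≤ t / Real.exp 1 := by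
      have h3 := Real.log_le_sub_one_of_pos (show 0 < t / Real.exp 1 by positivity)
      rw [Real.log_div (ne_of_gt ht0) (ne_of_gt he), Real.log_exp] at h3
      linarith
    have hid : t / Real.exp 1 + 1 / t - (1 + 1 / Real.exp 1)
        = -((t - 1) * (Real.exp 1 - t)) / (t * Real.exp 1) := by
      field_simp; ring
    have hnn : 0 ≤ (t - 1) * (Real.exp 1 - t) :=
      mul_nonneg (by linarith) (by linarith)
    have hfin : t / Real.exp 1 + 1 / t - (1 + 1 / Real.exp 1) ≤ 0 := by
      rw [hid]
      apply div_nonpos_of_nonpos_of_nonneg (by linarith) (by positivity)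
    linarith
  have hceq : c = t - t * Real.log t := by
    have h4 : t * Real.log t = xs := by
      rw [htlog]; field_simp
    have : xs = t - c := by rw [htdef]; ring
    linarith [h4, this]
  have keyA : (1 - c) / t ≤ 1 / Real.exp 1 := by
    have hid : (1 - c) / t = Real.log t + 1 / t - 1 := by
      rw [hceq]; field_simp; ring
    rw [hid]; linarith
  have main : ∀ A : ℝ, A ≤ 1 / Real.exp 1 → A / (2 * Real.log 2) ≤ 0.2654 := by
    intro A hA
    have h5 : A / (2 * Real.log 2) ≤ (1 / Real.exp 1) / (2 * Real.log 2) := by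
      gcongr
    have h6 : (1 / Real.exp 1) / (2 * Real.log 2) = 1 / (2 * Real.exp 1 * Real.log 2) := by
      field_simp
    rw [h6] at h5
    linarith [num_bound]
  by_cases hxxs : x ≤ xs
  · rw [hlin x hx hxxs]
    have hub : Real.log (1 + x) - x / t ≤ 1 / Real.exp 1 := by
      have h4 := Real.log_le_sub_one_of_pos (show 0 < (1 + x) / t by positivity)
      rw [Real.log_div (by positivity) (ne_of_gt ht0)] at h4
      have hr : (1 + x) / t - x / t = 1 / t := by ring
      linarith
    have hid : (1:ℝ) / 2 * Real.logb 2 (1 + x) - x / (2 * Real.log 2 * t)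
        = (Real.log (1 + x) - x / t) / (2 * Real.log 2) := by
      rw [Real.logb]; field_simp
    rw [hid]
    exact main _ hub
  · push_neg at hxxs
    rw [hlog x (le_of_lt hxxs)]
    have hxc : 0 < x + c := by linarith
    have hub : Real.log (1 + x) - Real.log (x + c) ≤ 1 / Real.exp 1 := by
      have h4 := Real.log_le_sub_one_of_pos (show 0 < (1 + x) / (x + c) by positivity)
      rw [Real.log_div (by positivity) (ne_of_gt hxc)] at h4
      have hr : (1 + x) / (x + c) - 1 = (1 - c) / (x + c) := by field_simp; ring
      have h5 : (1 - c) / (x + c) ≤ (1 - c) / t := by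
        apply div_le_div_of_nonneg_left (by linarith) ht0 (by rw [htdef]; linarith)
      linarith
    have hid : (1:ℝ) / 2 * Real.logb 2 (1 + x) - 1 / 2 * Real.logb 2 (x + c)
        = (Real.log (1 + x) - Real.log (x + c)) / (2 * Real.log 2) := by
      rw [Real.logb, Real.logb]; field_simp
    rw [hid]
    exact main _ hub
end

section
/- For every g with 0 < g < 1, setting c = 1/(g+1), and for every x ≥ 0, the gap satisfies (1/2)·log₂(1 + g·x) − k_g(x) ≤ 0.2658, where k_g is defined via the unique positive solution y* of ln(g·(y* + c)) = y*/(y* + c) by k_g(x) = x/(2·ln 2·(y* + c)) for 0 ≤ x ≤ y* and k_g(x) = (1/2)·log₂(g·x + g/(g+1)) for x ≥ y*. -/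
open Real

set_option maxHeartbeats 1000000

/-- For every `0 < g < 1` with `c = 1/(g+1)`, `y*` the unique positive solution of
`ln (g(y* + c)) = y*/(y* + c)`, and `k_g` the envelope function, the gap
`(1/2) log₂ (1 + g x) − k_g x` is at most `0.2658` for every `x ≥ 0`. -/
theorem stmt_9 (g : ℝ) (hg0 : 0 < g) (hg1 : g < 1) (c : ℝ) (hc : c = 1 / (g + 1))
    (ys : ℝ) (hys : 0 < ys) (heq : Real.log (g * (ys + c)) = ys / (ys + c))
    (k : ℝ → ℝ)
    (klin : ∀ x : ℝ, 0 ≤ x → x ≤ ys → k x = x / (2 * Real.log 2 * (ys + c)))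
    (klog : ∀ x : ℝ, ys ≤ x → k x = (1 / 2) * Real.logb 2 (g * x + g / (g + 1))) :
    ∀ x : ℝ, 0 ≤ x → (1 / 2) * Real.logb 2 (1 + g * x) - k x ≤ 0.2658 := by
  intro x hx
  have hg1p : (0:ℝ) < g + 1 := by linarith
  have hc0 : 0 < c := by rw [hc]; positivity
  set t := ys + c with ht_def
  have ht : 0 < t := by rw [ht_def]; linarith
  set u := g * t with hu_def
  have hu0 : 0 < u := mul_pos hg0 ht
  set a := g * c with ha_def
  have ha0 : 0 < a := mul_pos hg0 hc0
  have ha1 : a < 1 := by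
    rw [ha_def, hc, mul_one_div, div_lt_one hg1p]; linarith
  have hL : 0 < Real.log 2 := Real.log_pos (by norm_num)
  have hE : 0 < Real.exp 1 := Real.exp_pos 1
  have hcu : c / t = a / u := by
    rw [ha_def, hu_def]
    field_simp
  have hlu : Real.log u = 1 - a / u := by
    have h1 : Real.log u = ys / t := heq
    rw [h1, ← hcu]
    field_simp
    rw [ht_def]
    ring
  have hlupos : 0 < Real.log u := by
    rw [heq]; positivity
  have hu1 : 1 < u := by
    calc (1:ℝ) = Real.exp 0 := Real.exp_zero.symm
      _ < Real.exp (Real.log u) := Real.exp_lt_exp.mpr hlupos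
      _ = u := Real.exp_log hu0
  have ha1' : (0:ℝ) < 1 - a := by linarith
  have hau : a / u < a := div_lt_self ha0 hu1
  have hlog1a : Real.log (1 - a) ≤ -a := by
    have := Real.log_le_sub_one_of_pos ha1'
    linarith
  have hloglb : 1 + Real.log (1 - a) ≤ Real.log u := by
    rw [hlu]; linarith
  have hue : Real.exp 1 * (1 - a) ≤ u := by
    calc Real.exp 1 * (1 - a) = Real.exp (1 + Real.log (1 - a)) := by
          rw [Real.exp_add, Real.exp_log ha1']
      _ ≤ Real.exp (Real.log u) := Real.exp_le_exp.mpr hloglb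
      _ = u := Real.exp_log hu0
  have hfrac : (1 - a) / u ≤ 1 / Real.exp 1 := by
    rw [div_le_div_iff₀ hu0 hE]
    nlinarith
  have hnum : (1 / Real.exp 1) / (2 * Real.log 2) ≤ 0.2658 := by
    rw [div_div, div_le_iff₀ (by positivity)]
    nlinarith [Real.log_two_gt_d9, Real.exp_one_gt_d9]
  have hpos1 : 0 < 1 + g * x := by nlinarith
  rcases le_total x ys with hxy | hxy
  · -- linear part
    rw [klin x hx hxy]
    have step : Real.log (1 + g * x) ≤ Real.log u + ((1 + g * x) / u - 1) := by
      have h := Real.log_le_sub_one_of_pos (div_pos hpos1 hu0)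
      rw [Real.log_div (ne_of_gt hpos1) (ne_of_gt hu0)] at h
      linarith
    have hsplit : (1 + g * x) / u = 1 / u + x / t := by
      rw [hu_def]; field_simp
    have hval : Real.log u - 1 + 1 / u = (1 - a) / u := by
      rw [hlu, sub_div]; ring
    have key : Real.log (1 + g * x) - x / t ≤ 1 / Real.exp 1 := by
      have : Real.log (1 + g * x) - x / t ≤ (1 - a) / u := by
        rw [← hval]
        rw [hsplit] at step
        linarith
      linarith
    have hrw : (1 / 2) * Real.logb 2 (1 + g * x) - x / (2 * Real.log 2 * t)
        = (Real.log (1 + g * x) - x / t) / (2 * Real.log 2) := by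
      rw [Real.logb]
      field_simp
    rw [hrw]
    calc (Real.log (1 + g * x) - x / t) / (2 * Real.log 2)
        ≤ (1 / Real.exp 1) / (2 * Real.log 2) := by gcongr
      _ ≤ 0.2658 := hnum
  · -- log part
    rw [klog x hxy]
    have hgc : g / (g + 1) = a := by rw [ha_def, hc]; ring
    rw [hgc]
    have hxpos : 0 < g * x + a := by positivity
    have hux : u ≤ g * x + a := by
      have : g * ys ≤ g * x := mul_le_mul_of_nonneg_left hxy hg0.le
      rw [hu_def, ht_def]; nlinarith
    have hr : Real.log (1 + g * x) - Real.log (g * x + a)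
        ≤ (1 + g * x) / (g * x + a) - 1 := by
      have h := Real.log_le_sub_one_of_pos (div_pos hpos1 hxpos)
      rw [Real.log_div (ne_of_gt hpos1) (ne_of_gt hxpos)] at h
      linarith
    have hr2 : (1 + g * x) / (g * x + a) - 1 = (1 - a) / (g * x + a) := by
      rw [div_sub_one (ne_of_gt hxpos)]
      congr 1
      ring
    have hr3 : (1 - a) / (g * x + a) ≤ (1 - a) / u := by gcongr
    have key : Real.log (1 + g * x) - Real.log (g * x + a) ≤ 1 / Real.exp 1 := by
      rw [hr2] at hr
      linarith
    have hrw : (1 / 2) * Real.logb 2 (1 + g * x) - (1 / 2) * Real.logb 2 (g * x + a)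
        = (Real.log (1 + g * x) - Real.log (g * x + a)) / (2 * Real.log 2) := by
      rw [Real.logb, Real.logb]
      field_simp
    rw [hrw]
    calc (Real.log (1 + g * x) - Real.log (g * x + a)) / (2 * Real.log 2)
        ≤ (1 / Real.exp 1) / (2 * Real.log 2) := by gcongr
      _ ≤ 0.2658 := hnum
end

section
/- For fixed x ≥ 0, the gap for user 1 is nondecreasing in the channel gain: if 0 < g₁ ≤ g₂ and cᵢ = 1/(gᵢ+1) for i = 1, 2, then h_{c₂}(x) ≤ h_{c₁}(x), and hence (1/2)·log₂(1 + x) − h_{c₁}(x) ≤ (1/2)·log₂(1 + x) − h_{c₂}(x). -/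
/-! The tangency point `t = x*(c) + c` satisfies `c = t - t log t`, and `t ↦ t - t log t` is
strictly decreasing on `[1, ∞)`. So a larger gain (smaller `c`) moves both `t` and `x*(c)` to the
right, which makes the linear piece `x / t` flatter. This gives `h_{c₂} ≤ h_{c₁}` on each of the
three ranges of `x` cut out by `x*(c₁) ≤ x*(c₂)`; on the middle one because the concave
`log (· + c₁)` lies above the line `x / t₂` at both ends of `[x*(c₁), x*(c₂)]`. -/

open Real Set

lemma ConcaveOn.affine_le_of_mem_Icc {s : Set ℝ} {f : ℝ → ℝ} {a b z m q : ℝ}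
    (hf : ConcaveOn ℝ s f) (ha : a ∈ s) (hb : b ∈ s) (hz : z ∈ Icc a b)
    (hfa : m * a + q ≤ f a) (hfb : m * b + q ≤ f b) : m * z + q ≤ f z := by
  have hg : ConcaveOn ℝ s (fun x => f x - (m * x + q)) :=
    hf.sub (((LinearMap.mul ℝ ℝ m).convexOn hf.1).add_const q)
  exact sub_nonneg.1 <|
    (le_min (sub_nonneg.2 hfa) (sub_nonneg.2 hfb)).trans (hg.min_le_of_mem_Icc ha hb hz)

lemma strictAntiOn_self_sub_mul_log : StrictAntiOn (fun t : ℝ => t - t * log t) (Ici 1) := by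
  intro s hs t _ hst
  have hs0 : 0 < s := lt_of_lt_of_le one_pos hs
  have ht0 : 0 < t := hs0.trans hst
  have hlog : log (s / t) < s / t - 1 :=
    log_lt_sub_one_of_pos (by positivity) (by rw [Ne, div_eq_one_iff_eq ht0.ne']; exact hst.ne)
  rw [log_div hs0.ne' ht0.ne'] at hlog
  have key : t * (log s - log t) < s - t := by
    calc t * (log s - log t) < t * (s / t - 1) := by gcongr
      _ = s - t := by field_simp
  nlinarith [mul_nonneg (sub_nonneg.2 hst.le) (log_nonneg (mem_Ici.1 hs))]

section TangentPoint

variable {s t : ℝ}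

lemma one_lt_of_log_eq_div (hs : 0 < s) (ht : 0 < t) (h : log t = s / t) : 1 < t :=
  (log_pos_iff ht.le).mp (h ▸ div_pos hs ht)

lemma self_sub_mul_log_of_log_eq_div (ht : 0 < t) (h : log t = s / t) :
    t - t * log t = t - s := by
  rw [h, mul_div_cancel₀ _ ht.ne']

end TangentPoint

lemma add_le_add_of_log_add_eq_div {s₁ s₂ c₁ c₂ : ℝ} (hs₁ : 0 < s₁) (hs₂ : 0 < s₂)
    (hc₂ : 0 < c₂) (hc : c₂ ≤ c₁) (h₁ : log (s₁ + c₁) = s₁ / (s₁ + c₁))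
    (h₂ : log (s₂ + c₂) = s₂ / (s₂ + c₂)) : s₁ + c₁ ≤ s₂ + c₂ := by
  have ht₁ : 0 < s₁ + c₁ := by linarith
  have ht₂ : 0 < s₂ + c₂ := by linarith
  refine (strictAntiOn_self_sub_mul_log.le_iff_ge
    (one_lt_of_log_eq_div hs₂ ht₂ h₂).le (one_lt_of_log_eq_div hs₁ ht₁ h₁).le).mp ?_
  simp only [self_sub_mul_log_of_log_eq_div ht₁ h₁, self_sub_mul_log_of_log_eq_div ht₂ h₂]
  linarith

/-- `h_c` in natural-log units, with the tangency point `x*(c)` passed as `s`. -/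
noncomputable def tangentEnvelope (c s x : ℝ) : ℝ := if x ≤ s then x / (s + c) else log (x + c)

lemma tangentEnvelope_le_of_le {c₁ c₂ s₁ s₂ x : ℝ} (hs₁ : 0 < s₁) (hs₂ : 0 < s₂)
    (hc₂ : 0 < c₂) (hc : c₂ ≤ c₁) (h₁ : log (s₁ + c₁) = s₁ / (s₁ + c₁))
    (h₂ : log (s₂ + c₂) = s₂ / (s₂ + c₂)) (hx : 0 ≤ x) :
    tangentEnvelope c₂ s₂ x ≤ tangentEnvelope c₁ s₁ x := by
  have ht₁ : 0 < s₁ + c₁ := by linarith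
  have ht := add_le_add_of_log_add_eq_div hs₁ hs₂ hc₂ hc h₁ h₂
  unfold tangentEnvelope
  split_ifs with hx₂ hx₁ hx₁
  · gcongr
  · have hchord := strictConcaveOn_log_Ioi.concaveOn.affine_le_of_mem_Icc
      (z := x + c₁) (m := 1 / (s₂ + c₂)) (q := -(c₁ / (s₂ + c₂))) (mem_Ioi.2 ht₁)
      (mem_Ioi.2 (by linarith : 0 < s₂ + c₁)) ⟨by linarith, by linarith⟩ ?_ ?_
    · convert hchord using 1; ring
    · calc 1 / (s₂ + c₂) * (s₁ + c₁) + -(c₁ / (s₂ + c₂)) = s₁ / (s₂ + c₂) := by ring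
        _ ≤ s₁ / (s₁ + c₁) := by gcongr
        _ = log (s₁ + c₁) := h₁.symm
    · calc 1 / (s₂ + c₂) * (s₂ + c₁) + -(c₁ / (s₂ + c₂)) = s₂ / (s₂ + c₂) := by ring
        _ = log (s₂ + c₂) := h₂.symm
        _ ≤ log (s₂ + c₁) := by gcongr
  · linarith
  · gcongr

lemma eq_tangentEnvelope_div {h : ℝ → ℝ} {c s x : ℝ}
    (hlin : ∀ x : ℝ, 0 ≤ x → x ≤ s → h x = x / (2 * log 2 * (s + c)))
    (hlog : ∀ x : ℝ, s ≤ x → h x = (1 / 2) * logb 2 (x + c)) (hx : 0 ≤ x) :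
    h x = tangentEnvelope c s x / (2 * log 2) := by
  unfold tangentEnvelope
  split_ifs with hxs
  · rw [hlin x hx hxs, div_div, mul_comm (s + c)]
  · rw [hlog x (le_of_not_ge hxs), logb]
    ring

/-- Monotonicity of the user-1 gap in the channel gain: for fixed `x ≥ 0`, if
`0 < g₁ ≤ g₂` with `cᵢ = 1/(gᵢ+1)` and `h_{cᵢ}` the corresponding envelope functions,
then `h_{c₂} x ≤ h_{c₁} x`, hence
`(1/2) log₂ (1+x) − h_{c₁} x ≤ (1/2) log₂ (1+x) − h_{c₂} x`. -/
theorem stmt_10 (g1 g2 : ℝ) (hg1 : 0 < g1) (hg12 : g1 ≤ g2)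
    (c1 c2 : ℝ) (hc1 : c1 = 1 / (g1 + 1)) (hc2 : c2 = 1 / (g2 + 1))
    (xs1 : ℝ) (hxs1 : 0 < xs1) (heq1 : Real.log (xs1 + c1) = xs1 / (xs1 + c1))
    (xs2 : ℝ) (hxs2 : 0 < xs2) (heq2 : Real.log (xs2 + c2) = xs2 / (xs2 + c2))
    (h1 h2 : ℝ → ℝ)
    (h1lin : ∀ x : ℝ, 0 ≤ x → x ≤ xs1 → h1 x = x / (2 * Real.log 2 * (xs1 + c1)))
    (h1log : ∀ x : ℝ, xs1 ≤ x → h1 x = (1 / 2) * Real.logb 2 (x + c1))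
    (h2lin : ∀ x : ℝ, 0 ≤ x → x ≤ xs2 → h2 x = x / (2 * Real.log 2 * (xs2 + c2)))
    (h2log : ∀ x : ℝ, xs2 ≤ x → h2 x = (1 / 2) * Real.logb 2 (x + c2)) :
    ∀ x : ℝ, 0 ≤ x →
      h2 x ≤ h1 x ∧
      (1 / 2) * Real.logb 2 (1 + x) - h1 x ≤ (1 / 2) * Real.logb 2 (1 + x) - h2 x := by
  intro x hx
  have hc₂ : 0 < c2 := by rw [hc2]; exact one_div_pos.2 (by linarith)
  have hc : c2 ≤ c1 := by rw [hc1, hc2]; gcongr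
  have hle : h2 x ≤ h1 x := by
    rw [eq_tangentEnvelope_div h1lin h1log hx, eq_tangentEnvelope_div h2lin h2log hx]
    have := log_pos one_lt_two
    gcongr
    exact tangentEnvelope_le_of_le hxs1 hxs2 hc₂ hc heq1 heq2 hx
  exact ⟨hle, by linarith⟩
end

section
/- Let P > 0, N > 0 and g ≥ 0, and set a = √g and α* = (g + 1)·P / ((g + 1)·P + N). Then the effective noise variance N_eq(α*) = ((α*·√g − a)² + (α* − 1)²)·P + (α*)²·N equals P·(g + 1)·N / ((g + 1)·P + N), and consequently (1/2)·log₂( P / N_eq(α*) ) = (1/2)·log₂( 1/(g + 1) + P/N ). -/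
/-!
With the integer coefficient `a = √g` the lattice-mismatch term `(α√g − a)²` and the
`(α − 1)²` term combine to `(1 − α)²(g + 1)`, so `N_eq(α)` is the error of estimating a
signal of power `S = (g + 1)P` in noise `N` with gain `α`. At the MMSE gain `α* = S/(S + N)`
this error is `SN/(S + N)`, and `P` divided by it is `1/(g + 1) + P/N`.
-/

lemma effectiveNoise_sqrt_eq (α P N g : ℝ) (hg : 0 ≤ g) :
    ((α * Real.sqrt g - Real.sqrt g) ^ 2 + (α - 1) ^ 2) * P + α ^ 2 * N =
      (1 - α) ^ 2 * ((g + 1) * P) + α ^ 2 * N := by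
  linear_combination (α - 1) ^ 2 * P * Real.sq_sqrt hg

lemma mmse_error_eq (S N : ℝ) (hSN : S + N ≠ 0) :
    (1 - S / (S + N)) ^ 2 * S + (S / (S + N)) ^ 2 * N = S * N / (S + N) := by
  field_simp
  ring

/-- With `a = √g` and `α* = (g+1)P/((g+1)P + N)`, the effective-noise variance
`N_eq(α*) = ((α*√g − a)² + (α* − 1)²)P + (α*)²N` equals `P(g+1)N/((g+1)P + N)`, and
consequently `(1/2) log₂ (P/N_eq(α*)) = (1/2) log₂ (1/(g+1) + P/N)`. -/
theorem stmt_16 (P N g : ℝ) (hP : 0 < P) (hN : 0 < N) (hg : 0 ≤ g)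
    (a αs Neqv : ℝ) (ha : a = Real.sqrt g)
    (hαs : αs = (g + 1) * P / ((g + 1) * P + N))
    (hNeqv : Neqv = ((αs * Real.sqrt g - a) ^ 2 + (αs - 1) ^ 2) * P + αs ^ 2 * N) :
    Neqv = P * (g + 1) * N / ((g + 1) * P + N) ∧
    (1 / 2) * Real.logb 2 (P / Neqv) =
      (1 / 2) * Real.logb 2 (1 / (g + 1) + P / N) := by
  have hNeqv_eq : Neqv = P * (g + 1) * N / ((g + 1) * P + N) := by
    rw [hNeqv, ha, effectiveNoise_sqrt_eq _ _ _ _ hg, hαs,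
      mmse_error_eq _ _ (by positivity), mul_comm (g + 1) P]
  refine ⟨hNeqv_eq, ?_⟩
  have hratio : P / Neqv = 1 / (g + 1) + P / N := by
    rw [hNeqv_eq]
    field_simp
    ring
  rw [hratio]
end
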